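/- arXiv:1712.06865 — 4 statements merged into one kernel-verified Lean document; each statement's English description precedes it below -/
import Mathlib

section
/- Let n, m, d ≥ 1 be natural numbers and 0 < ε < 1 a real number. Let ψ be a formula consisting of m clauses, each with exactly 3 literals, over n variables, in which every variable occurs in at most d clauses. Then there exists a formula φ consisting of exactly 4m clauses, each with exactly 6 literals, over 2n variables, such that: (1) every variable of φ occurs in at most 4d clauses of φ; (2) if some assignment satisfies all m clauses of ψ, then some assignment NAE-satisfies all 4m clauses of φ; and (3) if every assignment satisfies at most (1−ε)m clauses of ψ, then every assignment NAE-satisfies at most (1−ε/4)·4m clauses of φ. -/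
/-- Value of a literal `(i, s)` under assignment `σ`. -/
def litVal {V : Type*} (σ : V → Bool) (l : V × Bool) : Bool :=
  if l.2 then σ l.1 else !(σ l.1)

/-- A clause is satisfied if some literal evaluates to true. -/
def SatC {V : Type*} {j : ℕ} (σ : V → Bool) (C : Fin j → V × Bool) : Prop :=
  ∃ r, litVal σ (C r) = true

/-- A clause is NAE-satisfied if some literal is true and some literal is false. -/
def NAESatC {V : Type*} {j : ℕ} (σ : V → Bool) (C : Fin j → V × Bool) : Prop :=
  (∃ r, litVal σ (C r) = true) ∧ (∃ r, litVal σ (C r) = false)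

instance {V : Type*} {j : ℕ} (σ : V → Bool) (C : Fin j → V × Bool) :
    Decidable (SatC σ C) := by unfold SatC; infer_instance

instance {V : Type*} {j : ℕ} (σ : V → Bool) (C : Fin j → V × Bool) :
    Decidable (NAESatC σ C) := by unfold NAESatC; infer_instance

/-- Number of clauses of the formula `C` in which variable `i` occurs. -/
def occCount {V : Type*} [DecidableEq V] {ι : Type*} [Fintype ι] {j : ℕ}
    (C : ι → Fin j → V × Bool) (i : V) : ℕ :=
  (Finset.univ.filter (fun a => ∃ r, (C a r).1 = i)).card

/-- Number of clauses of the formula `C` satisfied by `σ`. -/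
def satCount {V : Type*} {ι : Type*} [Fintype ι] {j : ℕ}
    (σ : V → Bool) (C : ι → Fin j → V × Bool) : ℕ :=
  (Finset.univ.filter (fun a => SatC σ (C a))).card

/-- Number of clauses of the formula `C` NAE-satisfied by `σ`. -/
def naeCount {V : Type*} {ι : Type*} [Fintype ι] {j : ℕ}
    (σ : V → Bool) (C : ι → Fin j → V × Bool) : ℕ :=
  (Finset.univ.filter (fun a => NAESatC σ (C a))).card

/-
Each variable `v` gets two copies `x v` and `y v`, and each 3-clause `C` is replaced by four
6-clauses, one for each sign pattern `p` with `p 0 = false`: the literals of `C` on the `x`-copies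
and the bare `y`-copies, all flipped according to `p`. Setting `y = 0` turns a satisfying assignment
into one that NAE-satisfies every gadget clause. Conversely, for any assignment of the copies, a
clause `C` left unsatisfied by `x ⊕ y` forces `y_{v_r} = ℓ_r(x)` on its literals, and the pattern
`p_r = ℓ_r(x) ⊕ ℓ_0(x)` then makes the corresponding gadget clause constant. So every clause of `ψ`
unsatisfied by `x ⊕ y` costs at least one of the `4m` clauses, and each variable occurs in exactly
four times as many clauses as before.
-/

open Finset

section Transport

variable {V W ι κ : Type*} [Fintype ι] [Fintype κ] {j : ℕ}

lemma card_filter_univ_comp_equiv (e : κ ≃ ι) (p : ι → Prop) [DecidablePred p] :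
    #{a | p (e a)} = #{a | p a} :=
  card_equiv e (by simp)

lemma naeCount_comp_equiv (e : κ ≃ ι) (τ : V → Bool) (C : ι → Fin j → V × Bool) :
    naeCount τ (C ∘ e) = naeCount τ C :=
  card_filter_univ_comp_equiv e (fun a => NAESatC τ (C a))

lemma occCount_comp_equiv [DecidableEq V] (e : κ ≃ ι) (C : ι → Fin j → V × Bool) (v : V) :
    occCount (C ∘ e) v = occCount C v :=
  card_filter_univ_comp_equiv e (fun a => ∃ r, (C a r).1 = v)

lemma naeSatC_rename (f : V → W) (τ : W → Bool) (C : Fin j → V × Bool) :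
    NAESatC τ (Prod.map f id ∘ C) ↔ NAESatC (τ ∘ f) C :=
  Iff.rfl

lemma naeCount_rename (f : V → W) (τ : W → Bool) (C : ι → Fin j → V × Bool) :
    naeCount τ (fun a => Prod.map f id ∘ C a) = naeCount (τ ∘ f) C :=
  rfl

lemma occCount_rename_equiv [DecidableEq V] [DecidableEq W] (f : V ≃ W)
    (C : ι → Fin j → V × Bool) (w : W) :
    occCount (fun a => Prod.map f id ∘ C a) w = occCount C (f.symm w) := by
  unfold occCount
  congr 1
  ext a
  simp [← Equiv.eq_symm_apply]

end Transport

section Literals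

variable {V : Type*}

lemma litVal_mk_xor (σ : V → Bool) (v : V) (s b : Bool) :
    litVal σ (v, xor s b) = xor (litVal σ (v, s)) b := by
  cases s <;> cases b <;> simp [litVal]

lemma litVal_mk_not (σ : V → Bool) (v : V) (b : Bool) : litVal σ (v, !b) = xor (σ v) b := by
  cases b <;> simp [litVal]

lemma litVal_xor (σ ρ : V → Bool) (l : V × Bool) :
    litVal (fun v => xor (σ v) (ρ v)) l = xor (litVal σ l) (ρ l.1) := by
  unfold litVal
  split <;> simp

lemma not_naeSatC_of_forall_litVal_eq {j : ℕ} {σ : V → Bool} {C : Fin j → V × Bool} (b : Bool)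
    (h : ∀ r, litVal σ (C r) = b) : ¬ NAESatC σ C := by
  rintro ⟨⟨r, hr⟩, ⟨r', hr'⟩⟩
  simp [h] at hr hr'
  simp [hr] at hr'

end Literals

lemma Fin.exists_append_iff {α : Type*} {m n : ℕ} (u : Fin m → α) (w : Fin n → α) (P : α → Prop) :
    (∃ r, P (Fin.append u w r)) ↔ (∃ r, P (u r)) ∨ (∃ r, P (w r)) := by
  constructor
  · rintro ⟨r, hr⟩
    induction r using Fin.addCases with
    | left r => exact .inl ⟨r, by simpa using hr⟩
    | right r => exact .inr ⟨r, by simpa using hr⟩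
  · rintro (⟨r, hr⟩ | ⟨r, hr⟩)
    · exact ⟨Fin.castAdd n r, by simpa using hr⟩
    · exact ⟨Fin.natAdd m r, by simpa using hr⟩

section Gadget

variable {V : Type*} {k : ℕ}

/-- With `x v = (0, v)` and `y v = (1, v)`, the clause `C = (ℓ_r)_r` and the sign pattern `p`
give the NAE clause `(ℓ_r(x) ⊕ p_r)_r ++ (y_{v_r} ⊕ p_r)_r`, where `v_r` is the variable of `ℓ_r`. -/
def naeGadget (C : Fin k → V × Bool) (p : Fin k → Bool) : Fin (k + k) → (Fin 2 × V) × Bool :=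
  Fin.append (fun r => ((0, (C r).1), xor (C r).2 (p r))) (fun r => ((1, (C r).1), !p r))

variable (C : Fin k → V × Bool) (p : Fin k → Bool) (τ : Fin 2 × V → Bool)

lemma litVal_naeGadget_castAdd (r : Fin k) :
    litVal τ (naeGadget C p (Fin.castAdd k r)) = xor (litVal (fun v => τ (0, v)) (C r)) (p r) := by
  rw [naeGadget, Fin.append_left, litVal_mk_xor]
  rfl

lemma litVal_naeGadget_natAdd (r : Fin k) :
    litVal τ (naeGadget C p (Fin.natAdd k r)) = xor (τ (1, (C r).1)) (p r) := by
  rw [naeGadget, Fin.append_right, litVal_mk_not]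

lemma exists_naeGadget_fst_eq_iff (x : Fin 2 × V) :
    (∃ r, (naeGadget C p r).1 = x) ↔ ∃ r, (C r).1 = x.2 := by
  obtain ⟨i, v⟩ := x
  simp only [naeGadget, Fin.exists_append_iff (P := fun l : (Fin 2 × V) × Bool => l.1 = (i, v))]
  fin_cases i <;> simp

lemma naeSatC_naeGadget {σ : V → Bool} (hC : SatC σ C) {r₀ : Fin k} (hp : p r₀ = false) :
    NAESatC (fun x => ![σ x.2, false] x.1) (naeGadget C p) := by
  refine ⟨?_, Fin.natAdd k r₀, by rw [litVal_naeGadget_natAdd]; simp [hp]⟩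
  by_cases h : ∃ r, p r = true
  · obtain ⟨r, hr⟩ := h
    exact ⟨Fin.natAdd k r, by rw [litVal_naeGadget_natAdd]; simp [hr]⟩
  · push Not at h
    obtain ⟨r, hr⟩ := hC
    exact ⟨Fin.castAdd k r, by simpa [litVal_naeGadget_castAdd, h r] using hr⟩

lemma exists_not_naeSatC_naeGadget (hC : ¬ SatC (fun v => xor (τ (0, v)) (τ (1, v))) C)
    (r₀ : Fin k) : ∃ p : Fin k → Bool, p r₀ = false ∧ ¬ NAESatC τ (naeGadget C p) := by
  set a : Fin k → Bool := fun r => litVal (fun v => τ (0, v)) (C r)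
  have hcopy : ∀ r, τ (1, (C r).1) = a r := by
    intro r
    have hr : litVal (fun v => xor (τ (0, v)) (τ (1, v))) (C r) = false := by
      simp only [SatC, not_exists, Bool.not_eq_true] at hC
      exact hC r
    rw [litVal_xor, Bool.xor, bne_eq_false_iff_eq] at hr
    exact hr.symm
  -- this pattern makes every literal of the gadget evaluate to `a r₀`
  refine ⟨fun r => xor (a r) (a r₀), by simp, not_naeSatC_of_forall_litVal_eq (a r₀) ?_⟩
  intro r
  induction r using Fin.addCases with
  | left r => simp [litVal_naeGadget_castAdd, a]
  | right r => rw [litVal_naeGadget_natAdd, hcopy]; simp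

end Gadget

section Formula

variable {V ι : Type*} {k : ℕ}

/-- With `x v = (0, v)` and `y v = (1, v)`, the clause `C = (ℓ_r)_r` and the sign pattern `p`
give the NAE clause `(ℓ_r(x) ⊕ p_r)_r ++ (y_{v_r} ⊕ p_r)_r`, where `v_r` is the variable of `ℓ_r`. -/
def naeGadgetFormula (ψ : ι → Fin (k + 1) → V × Bool) :
    (Fin k → Bool) × ι → Fin ((k + 1) + (k + 1)) → (Fin 2 × V) × Bool :=
  fun x => naeGadget (ψ x.2) (Fin.cons false x.1)

variable (ψ : ι → Fin (k + 1) → V × Bool)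

lemma occCount_naeGadgetFormula [Fintype ι] [DecidableEq V] (x : Fin 2 × V) :
    occCount (naeGadgetFormula ψ) x = 2 ^ k * occCount ψ x.2 := by
  unfold occCount naeGadgetFormula
  simp_rw [exists_naeGadget_fst_eq_iff]
  have : univ.filter (fun y : (Fin k → Bool) × ι => ∃ r, (ψ y.2 r).1 = x.2) =
      univ ×ˢ univ.filter (fun a => ∃ r, (ψ a r).1 = x.2) := by
    ext; simp
  rw [this, card_product, card_univ]
  simp

lemma exists_naeSatC_naeGadgetFormula {σ : V → Bool} (h : ∀ a, SatC σ (ψ a)) :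
    ∃ τ, ∀ x, NAESatC τ (naeGadgetFormula ψ x) :=
  ⟨_, fun x => naeSatC_naeGadget _ _ (h x.2) (r₀ := 0) rfl⟩

lemma naeCount_naeGadgetFormula_add_card_le [Fintype ι] (τ : Fin 2 × V → Bool) :
    naeCount τ (naeGadgetFormula ψ) + Fintype.card ι ≤
      2 ^ k * Fintype.card ι + satCount (fun v => xor (τ (0, v)) (τ (1, v))) ψ := by
  classical
  set σ : V → Bool := fun v => xor (τ (0, v)) (τ (1, v))
  have hunsat : #{a | ¬ SatC σ (ψ a)} ≤ #{x | ¬ NAESatC τ (naeGadgetFormula ψ x)} := by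
    refine (card_le_card fun a ha => ?_).trans (card_image_le (f := Prod.snd))
    obtain ⟨p, hp0, hp⟩ := exists_not_naeSatC_naeGadget (ψ a) τ (by simpa using ha) 0
    refine mem_image.2 ⟨(Fin.tail p, a), ?_, rfl⟩
    have hΦ : naeGadgetFormula ψ (Fin.tail p, a) = naeGadget (ψ a) p := by
      simp only [naeGadgetFormula]
      rw [← hp0, Fin.cons_self_tail]
    simpa [hΦ] using hp
  have hnae := card_filter_add_card_filter_not (s := univ)
    (fun x => NAESatC τ (naeGadgetFormula ψ x))
  have hsat := card_filter_add_card_filter_not (s := univ) (fun a => SatC σ (ψ a))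
  simp only [card_univ, Fintype.card_prod, Fintype.card_fun, Fintype.card_bool,
    Fintype.card_fin] at hnae hsat
  unfold naeCount satCount
  omega

end Formula

theorem stmt_0_general (n m d : ℕ)
    (ε : ℝ)
    (ψ : Fin m → Fin 3 → Fin n × Bool)
    (hocc : ∀ i : Fin n, occCount ψ i ≤ d) :
    ∃ φ : Fin (4 * m) → Fin 6 → Fin (2 * n) × Bool,
      (∀ i : Fin (2 * n), occCount φ i ≤ 4 * d) ∧
      ((∃ σ : Fin n → Bool, ∀ a, SatC σ (ψ a)) →
        ∃ τ : Fin (2 * n) → Bool, ∀ a, NAESatC τ (φ a)) ∧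
      ((∀ σ : Fin n → Bool, (satCount σ ψ : ℝ) ≤ (1 - ε) * m) →
        ∀ τ : Fin (2 * n) → Bool, (naeCount τ φ : ℝ) ≤ (1 - ε / 4) * (4 * m)) := by
  let e : Fin (4 * m) ≃ (Fin 2 → Bool) × Fin m := Fintype.equivOfCardEq (by simp)
  let f : Fin 2 × Fin n ≃ Fin (2 * n) := finProdFinEquiv
  refine ⟨fun a => Prod.map f id ∘ (naeGadgetFormula ψ ∘ e) a, fun i => ?_, ?_, fun hψ τ => ?_⟩
  · rw [occCount_rename_equiv, occCount_comp_equiv, occCount_naeGadgetFormula]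
    have := hocc (f.symm i).2
    omega
  · rintro ⟨σ, hσ⟩
    obtain ⟨τ, hτ⟩ := exists_naeSatC_naeGadgetFormula ψ hσ
    refine ⟨τ ∘ f.symm, fun a => (naeSatC_rename f _ _).2 ?_⟩
    rw [Function.comp_assoc, f.symm_comp_self, Function.comp_id]
    exact hτ (e a)
  · rw [naeCount_rename, naeCount_comp_equiv]
    have hcount := naeCount_naeGadgetFormula_add_card_le ψ (τ ∘ f)
    rw [Fintype.card_fin] at hcount
    set σ : Fin n → Bool := fun v => xor ((τ ∘ f) (0, v)) ((τ ∘ f) (1, v))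
    have hcount' : (naeCount (τ ∘ f) (naeGadgetFormula ψ) : ℝ) + m ≤ 2 ^ 2 * m + satCount σ ψ := by
      exact_mod_cast hcount
    linarith [hψ σ]

/-- Reduction from E3-SAT to NAE6-SAT (Lemma: esat-nae6sat). -/
theorem stmt_0 (n m d : ℕ) (hn : 1 ≤ n) (hm : 1 ≤ m) (hd : 1 ≤ d)
    (ε : ℝ) (hε0 : 0 < ε) (hε1 : ε < 1)
    (ψ : Fin m → Fin 3 → Fin n × Bool)
    (hocc : ∀ i : Fin n, occCount ψ i ≤ d) :
    ∃ φ : Fin (4 * m) → Fin 6 → Fin (2 * n) × Bool,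
      (∀ i : Fin (2 * n), occCount φ i ≤ 4 * d) ∧
      ((∃ σ : Fin n → Bool, ∀ a, SatC σ (ψ a)) →
        ∃ τ : Fin (2 * n) → Bool, ∀ a, NAESatC τ (φ a)) ∧
      ((∀ σ : Fin n → Bool, (satCount σ ψ : ℝ) ≤ (1 - ε) * m) →
        ∀ τ : Fin (2 * n) → Bool, (naeCount τ φ : ℝ) ≤ (1 - ε / 4) * (4 * m)) :=
  stmt_0_general n m d ε ψ hocc
end

section
/- Let ψ be a formula of m clauses, each with exactly 3 literals, over n variables. Construct the formula φ over the variable index type Fin n ⊕ Fin n (writing yᵢ for inl i and zᵢ for inr i) as follows: for a literal l = (i, s) of ψ, let p(l) be the literal (yᵢ, true) and q(l) the literal (zᵢ, s); for each clause (l₁, l₂, l₃) of ψ, φ contains the four 6-literal clauses (p₁,q₁,p₂,q₂,p₃,q₃), (p₁,q₁,p₂,q₂,¬p₃,¬q₃), (p₁,q₁,¬p₂,¬q₂,p₃,q₃), (p₁,q₁,¬p₂,¬q₂,¬p₃,¬q₃), where ¬ flips the sign component of a literal and pᵣ = p(lᵣ), qᵣ = q(lᵣ). Then for every assignment τ : Fin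 n ⊕ Fin n → Bool, the number of clauses of φ that are NAE-satisfied by τ equals 3m plus the number of clauses of ψ satisfied by the assignment σ_τ : Fin n → Bool defined by σ_τ(i) = (τ(yᵢ) ≠ τ(zᵢ)). -/
/-- Negation of a literal: flip the sign component. -/
def negLit {V : Type*} (l : V × Bool) : V × Bool := (l.1, !l.2)

/-- `p(l)` : the literal `(yᵢ, true)` for a literal `l = (i, s)`. -/
def pLit {n : ℕ} (l : Fin n × Bool) : (Fin n ⊕ Fin n) × Bool := (Sum.inl l.1, true)

/-- `q(l)` : the literal `(zᵢ, s)` for a literal `l = (i, s)`. -/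
def qLit {n : ℕ} (l : Fin n × Bool) : (Fin n ⊕ Fin n) × Bool := (Sum.inr l.1, l.2)

/-- The four NAE6 clauses produced from each 3-literal clause of `ψ`. -/
def phiGG {n m : ℕ} (ψ : Fin m → Fin 3 → Fin n × Bool) :
    Fin m × Fin 4 → Fin 6 → (Fin n ⊕ Fin n) × Bool := fun ab =>
  let P : Fin 3 → (Fin n ⊕ Fin n) × Bool := fun r => pLit (ψ ab.1 r)
  let Q : Fin 3 → (Fin n ⊕ Fin n) × Bool := fun r => qLit (ψ ab.1 r)
  if ab.2 = 0 then ![P 0, Q 0, P 1, Q 1, P 2, Q 2]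
  else if ab.2 = 1 then ![P 0, Q 0, P 1, Q 1, negLit (P 2), negLit (Q 2)]
  else if ab.2 = 2 then ![P 0, Q 0, negLit (P 1), negLit (Q 1), P 2, Q 2]
  else ![P 0, Q 0, negLit (P 1), negLit (Q 1), negLit (P 2), negLit (Q 2)]

/-- For every assignment `τ`, the number of NAE-satisfied clauses of `φ = phiGG ψ`
equals `3 m` plus the number of clauses of `ψ` satisfied by `σ_τ (i) = (τ yᵢ ≠ τ zᵢ)`. -/
theorem stmt_1 (n m : ℕ) (ψ : Fin m → Fin 3 → Fin n × Bool)
    (τ : Fin n ⊕ Fin n → Bool) :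
    naeCount τ (phiGG ψ) =
      3 * m + satCount (fun i => τ (Sum.inl i) != τ (Sum.inr i)) ψ := by
  classical
  have hinner : ∀ a : Fin m,
      (Finset.univ.filter fun b : Fin 4 => NAESatC τ (phiGG ψ (a, b))).card
        = 3 + (if SatC (fun i => τ (Sum.inl i) != τ (Sum.inr i)) (ψ a) then 1 else 0) := by
    intro a
    have hv : ∀ r, litVal (fun i => τ (Sum.inl i) != τ (Sum.inr i)) (ψ a r)
        = (τ (Sum.inl (ψ a r).1) != litVal τ (qLit (ψ a r))) := by
      intro r; rcases h : ψ a r with ⟨i, s⟩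
      cases s <;> simp [litVal, qLit]
    rw [Finset.card_filter, Fin.sum_univ_four]
    have hS : SatC (fun i => τ (Sum.inl i) != τ (Sum.inr i)) (ψ a) ↔
        ((τ (Sum.inl (ψ a 0).1) != litVal τ (qLit (ψ a 0)))
          || (τ (Sum.inl (ψ a 1).1) != litVal τ (qLit (ψ a 1)))
          || (τ (Sum.inl (ψ a 2).1) != litVal τ (qLit (ψ a 2)))) = true := by
      simp only [SatC, hv, Fin.exists_fin_succ]
      simp [or_assoc]
    simp only [hS]
    have hp : ∀ r, litVal τ (pLit (ψ a r)) = τ (Sum.inl (ψ a r).1) := fun r => rfl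
    have hnp : ∀ r, litVal τ (negLit (pLit (ψ a r))) = !(τ (Sum.inl (ψ a r).1)) := by
      intro r; simp [litVal, negLit, pLit]
    have hnq : ∀ r, litVal τ (negLit (qLit (ψ a r))) = !(litVal τ (qLit (ψ a r))) := by
      intro r; rcases h : ψ a r with ⟨i, s⟩; cases s <;> simp [litVal, negLit, qLit]
    simp only [phiGG, NAESatC, Fin.exists_fin_succ, Matrix.cons_val_zero,
      Matrix.cons_val_succ, Fin.isValue, Fin.reduceEq, if_true, if_false,
      reduceIte, hp, hnp, hnq, IsEmpty.exists_iff, or_false]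
    generalize τ (Sum.inl (ψ a 0).1) = u0
    generalize τ (Sum.inl (ψ a 1).1) = u1
    generalize τ (Sum.inl (ψ a 2).1) = u2
    generalize litVal τ (qLit (ψ a 0)) = v0
    generalize litVal τ (qLit (ψ a 1)) = v1
    generalize litVal τ (qLit (ψ a 2)) = v2
    revert u0 u1 u2 v0 v1 v2
    decide
  rw [naeCount, Finset.card_filter, Fintype.sum_prod_type]
  have : ∀ a : Fin m, (∑ b : Fin 4, if NAESatC τ (phiGG ψ (a, b)) then 1 else 0)
      = 3 + (if SatC (fun i => τ (Sum.inl i) != τ (Sum.inr i)) (ψ a) then 1 else 0) := by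
    intro a; rw [← hinner a, Finset.card_filter]
  simp only [this]
  rw [Finset.sum_add_distrib, Finset.sum_const, satCount, Finset.card_filter]
  simp [mul_comm]
end

section
/- Let n, m, d ≥ 1 be natural numbers and 0 < ε < 1 a real number. Let ψ be a formula consisting of m clauses, each with exactly 3 literals, over n variables, in which every variable occurs in at least one and at most d clauses. Then there exists a monotone formula φ (every literal has positive sign) consisting of exactly m + 4dn clauses, each with exactly 3 literals, over 2n + 3dn variables, such that: (1) every variable of φ occurs in at most 4d clauses of φ; (2) if some assignment NAE-satisfies all m clauses of ψ, then some assignment NAE-satisfies all m + 4dn clauses of φ; and (3) if every assignment NAE-satisfies at most (1−ε)m clauses of ψ, then every assignment NAE-satisfies at most (1 − ε/(1+12d))·(m + 4dn) clauses of φ. -/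
/-!
Replace each literal `(i, s)` of `ψ` by a positive variable `(i, s)`, and for every variable `i`
add `d` gadgets, each with auxiliary variables `a₀, a₁, a₂` and the four clauses `((i, true),
(i, false), a_c)` and `(a₀, a₁, a₂)`. An assignment `σ` of `ψ` extends to one of `φ` giving
`(i, s)` the value of the literal, and then every gadget clause is NAE-satisfied.

Conversely, let `τ` be an assignment of `φ` and let `k` be the number of variables `i` with
`τ (i, true) = τ (i, false)`. The translated clauses avoiding these `k` variables behave as under
`σ i := τ (i, true)`, and at most `d k` clauses touch them; but each of their `d k` gadgets has a
clause that is not NAE-satisfied. Hence `τ` NAE-satisfies at most `naeCount σ ψ + 4 d n` clauses.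
Since every variable occurs in `ψ`, `n ≤ 3 m`, so this loses a fraction at most
`ε / (1 + 12 d)` of the `m + 4 d n` clauses.
-/

open Finset

section Formula

variable {V V' ι ι' κ : Type*} {j : ℕ}

lemma naeSatC_congr {τ : V → Bool} {τ' : V' → Bool} {C : Fin j → V × Bool}
    {C' : Fin j → V' × Bool} (h : ∀ r, litVal τ (C r) = litVal τ' (C' r)) :
    NAESatC τ C ↔ NAESatC τ' C' := by
  simp only [NAESatC, h]

lemma not_naeSatC_of_litVal_eq {τ : V → Bool} {C : Fin j → V × Bool} (b : Bool)
    (h : ∀ r, litVal τ (C r) = b) : ¬ NAESatC τ C := by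
  rintro ⟨⟨r, hr⟩, ⟨r', hr'⟩⟩
  rw [h] at hr hr'
  cases hr.symm.trans hr'

lemma naeSatC_of_litVal_ne {τ : V → Bool} {C : Fin j → V × Bool} {r r' : Fin j}
    (h : litVal τ (C r) ≠ litVal τ (C r')) : NAESatC τ C := by
  cases hr : litVal τ (C r) <;> rw [hr] at h
  · exact ⟨⟨r', by simpa using h.symm⟩, ⟨r, hr⟩⟩
  · exact ⟨⟨r, hr⟩, ⟨r', by simpa using h.symm⟩⟩

def relabel (eI : ι ≃ ι') (eV : V ≃ V') (C : ι → Fin j → V × Bool) :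
    ι' → Fin j → V' × Bool :=
  fun a r => Prod.map eV id (C (eI.symm a) r)

lemma naeSatC_relabel (eI : ι ≃ ι') (eV : V ≃ V') (C : ι → Fin j → V × Bool)
    (τ : V' → Bool) (a : ι') :
    NAESatC τ (relabel eI eV C a) ↔ NAESatC (τ ∘ eV) (C (eI.symm a)) :=
  Iff.rfl

variable [Fintype ι] [Fintype ι'] [Fintype κ]

lemma naeCount_relabel (eI : ι ≃ ι') (eV : V ≃ V') (C : ι → Fin j → V × Bool)
    (τ : V' → Bool) : naeCount τ (relabel eI eV C) = naeCount (τ ∘ eV) C :=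
  card_equiv eI.symm fun a => by simp [naeSatC_relabel]

lemma occCount_relabel [DecidableEq V] [DecidableEq V'] (eI : ι ≃ ι') (eV : V ≃ V')
    (C : ι → Fin j → V × Bool) (v : V) : occCount (relabel eI eV C) (eV v) = occCount C v :=
  card_equiv eI.symm fun a => by simp [relabel]

lemma occCount_sumElim [DecidableEq V] (C : ι → Fin j → V × Bool)
    (D : κ → Fin j → V × Bool) (v : V) :
    occCount (Sum.elim C D) v = occCount C v + occCount D v := by
  simp only [occCount, card_filter, Fintype.sum_sum_type, Sum.elim_inl, Sum.elim_inr]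
  rfl

lemma naeCount_sumElim (C : ι → Fin j → V × Bool) (D : κ → Fin j → V × Bool)
    (τ : V → Bool) :
    naeCount τ (Sum.elim C D) = naeCount τ C + naeCount τ D := by
  simp only [naeCount, card_filter, Fintype.sum_sum_type, Sum.elim_inl, Sum.elim_inr]
  rfl

lemma card_le_mul_card_of_one_le_occCount [Fintype V] [DecidableEq V]
    (C : ι → Fin j → V × Bool) (h : ∀ v, 1 ≤ occCount C v) :
    Fintype.card V ≤ j * Fintype.card ι := by
  have hclause : ∀ a, #{v | ∃ r, (C a r).1 = v} ≤ j := fun a =>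
    calc #{v | ∃ r, (C a r).1 = v} = #(univ.image fun r => (C a r).1) := by
          congr 1; ext v; simp
      _ ≤ j := card_image_le.trans (by simp)
  calc Fintype.card V = ∑ _v : V, 1 := by simp
    _ ≤ ∑ v, occCount C v := sum_le_sum fun v _ => h v
    _ = ∑ a, #{v | ∃ r, (C a r).1 = v} := by
        simp only [occCount, card_filter]; exact sum_comm
    _ ≤ ∑ _a : ι, j := sum_le_sum fun a _ => hclause a
    _ = j * Fintype.card ι := by simp [mul_comm]

end Formula

namespace MonotoneReduction

variable {n m d : ℕ}

/-- `.inl (i, s)` is the positive variable replacing the literal `(i, s)` of `ψ`; `.inr (g, c)`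
are the three auxiliary variables of the gadget `g = (i, t)`. -/
abbrev Var (n d : ℕ) := (Fin n × Bool) ⊕ ((Fin n × Fin d) × Fin 3)

abbrev Clause (n m d : ℕ) := Fin m ⊕ ((Fin n × Fin d) × Option (Fin 3))

def liftFormula (d : ℕ) (ψ : Fin m → Fin 3 → Fin n × Bool) :
    Fin m → Fin 3 → Var n d × Bool :=
  fun a r => (.inl (ψ a r), true)

def gadget (g : Fin n × Fin d) : Option (Fin 3) → Fin 3 → Var n d
  | some c => ![.inl (g.1, true), .inl (g.1, false), .inr (g, c)]
  | none => fun c => .inr (g, c)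

def gadgetFormula (n d : ℕ) : (Fin n × Fin d) × Option (Fin 3) → Fin 3 → Var n d × Bool :=
  fun x r => (gadget x.1 x.2 r, true)

def formula (d : ℕ) (ψ : Fin m → Fin 3 → Fin n × Bool) :
    Clause n m d → Fin 3 → Var n d × Bool :=
  Sum.elim (liftFormula d ψ) (gadgetFormula n d)

lemma formula_snd (ψ : Fin m → Fin 3 → Fin n × Bool) (x : Clause n m d) (r : Fin 3) :
    (formula d ψ x r).2 = true := by
  rcases x with a | x <;> rfl

lemma naeSatC_liftFormula_iff {ψ : Fin m → Fin 3 → Fin n × Bool} {τ : Var n d → Bool}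
    {σ : Fin n → Bool} {a : Fin m} (h : ∀ r, τ (.inl (ψ a r)) = litVal σ (ψ a r)) :
    NAESatC τ (liftFormula d ψ a) ↔ NAESatC σ (ψ a) :=
  naeSatC_congr h

lemma occCount_liftFormula_inl_le (ψ : Fin m → Fin 3 → Fin n × Bool) (l : Fin n × Bool) :
    occCount (liftFormula d ψ) (.inl l) ≤ occCount ψ l.1 :=
  card_le_card fun a => by
    simp only [liftFormula, mem_filter, mem_univ, true_and, Sum.inl.injEq]
    exact fun ⟨r, hr⟩ => ⟨r, by rw [hr]⟩

lemma occCount_liftFormula_inr (ψ : Fin m → Fin 3 → Fin n × Bool)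
    (y : (Fin n × Fin d) × Fin 3) :
    occCount (liftFormula d ψ) (.inr y) = 0 := by
  simp [occCount, liftFormula]

lemma occCount_gadgetFormula_inl_le (l : Fin n × Bool) :
    occCount (gadgetFormula n d) (.inl l) ≤ 3 * d := by
  calc occCount (gadgetFormula n d) (.inl l)
      ≤ #(univ.image fun y : Fin d × Fin 3 => ((l.1, y.1), some y.2)) := by
        refine card_le_card fun x hx => ?_
        simp only [mem_filter, mem_univ, true_and] at hx
        obtain ⟨r, hr⟩ := hx
        obtain ⟨⟨i, t⟩, c | c⟩ := x <;> fin_cases r <;>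
          aesop (add simp [gadgetFormula, gadget])
    _ ≤ 3 * d := card_image_le.trans (by simp [mul_comm])

lemma occCount_gadgetFormula_inr_le (y : (Fin n × Fin d) × Fin 3) :
    occCount (gadgetFormula n d) (.inr y) ≤ 2 := by
  calc occCount (gadgetFormula n d) (.inr y) ≤ #{(y.1, some y.2), (y.1, none)} := by
        refine card_le_card fun x hx => ?_
        simp only [mem_filter, mem_univ, true_and] at hx
        obtain ⟨r, hr⟩ := hx
        obtain ⟨⟨i, t⟩, c | c⟩ := x <;> fin_cases r <;>
          aesop (add simp [gadgetFormula, gadget])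
    _ ≤ 2 := card_le_two

lemma occCount_formula_le (ψ : Fin m → Fin 3 → Fin n × Bool)
    (hψ : ∀ i, occCount ψ i ≤ d) (v : Var n d) : occCount (formula d ψ) v ≤ 4 * d := by
  rw [formula, occCount_sumElim]
  rcases v with l | y
  · have := occCount_liftFormula_inl_le (d := d) ψ l
    have := occCount_gadgetFormula_inl_le (d := d) l
    have := hψ l.1
    omega
  · have := occCount_gadgetFormula_inr_le y
    have := y.1.2.pos
    rw [occCount_liftFormula_inr]
    omega

def decode (τ : Var n d → Bool) (i : Fin n) : Bool := τ (.inl (i, true))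

def collapsed (τ : Var n d → Bool) : Finset (Fin n) :=
  {i | τ (.inl (i, true)) = τ (.inl (i, false))}

def encode (d : ℕ) (σ : Fin n → Bool) : Var n d → Bool
  | .inl l => litVal σ l
  | .inr (_, c) => decide (c = 0)

@[simp]
lemma mem_collapsed {τ : Var n d → Bool} {i : Fin n} :
    i ∈ collapsed τ ↔ τ (.inl (i, true)) = τ (.inl (i, false)) := by
  simp [collapsed]

section Soundness

variable (τ : Var n d → Bool)

lemma apply_inl_eq_litVal_decode {i : Fin n} (hi : i ∉ collapsed τ) (s : Bool) :
    τ (.inl (i, s)) = litVal (decode τ) (i, s) := by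
  rw [mem_collapsed] at hi
  cases s <;> simp [litVal, decode, Bool.eq_not_iff.mpr (Ne.symm hi)]

lemma naeCount_liftFormula_le (ψ : Fin m → Fin 3 → Fin n × Bool)
    (hψ : ∀ i, occCount ψ i ≤ d) :
    naeCount τ (liftFormula d ψ) ≤ naeCount (decode τ) ψ + d * #(collapsed τ) := by
  have hsub : ({a | NAESatC τ (liftFormula d ψ a)} : Finset (Fin m)) ⊆
      ({a | NAESatC (decode τ) (ψ a)} : Finset (Fin m)) ∪
        (collapsed τ).biUnion fun i => {a | ∃ r, (ψ a r).1 = i} := by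
    intro a ha
    simp only [mem_union, mem_biUnion, mem_filter, mem_univ, true_and] at ha ⊢
    by_contra! h
    exact h.1 ((naeSatC_liftFormula_iff fun r =>
      apply_inl_eq_litVal_decode τ (fun hr => h.2 _ hr r rfl) _).mp ha)
  calc naeCount τ (liftFormula d ψ) ≤ _ := card_le_card hsub
    _ ≤ naeCount (decode τ) ψ + ∑ i ∈ collapsed τ, occCount ψ i :=
        (card_union_le _ _).trans (Nat.add_le_add_left card_biUnion_le _)
    _ ≤ naeCount (decode τ) ψ + d * #(collapsed τ) := by
        grw [sum_le_sum fun i _ => hψ i, sum_const, smul_eq_mul, mul_comm]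

lemma exists_not_naeSatC_gadgetFormula {g : Fin n × Fin d} (hg : g.1 ∈ collapsed τ) :
    ∃ c, ¬ NAESatC τ (gadgetFormula n d (g, c)) := by
  rw [mem_collapsed] at hg
  by_cases h : ∃ c, τ (.inr (g, c)) = τ (.inl (g.1, true))
  · obtain ⟨c, hc⟩ := h
    refine ⟨some c, not_naeSatC_of_litVal_eq (τ (.inl (g.1, true))) fun r => ?_⟩
    fin_cases r <;> simp [gadgetFormula, gadget, litVal, hc, hg]
  · push Not at h
    refine ⟨none, not_naeSatC_of_litVal_eq (!τ (.inl (g.1, true))) fun r => ?_⟩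
    simpa [gadgetFormula, gadget, litVal, Bool.eq_not_iff] using h r

lemma card_naeSatC_gadgetFormula_add_le (g : Fin n × Fin d) :
    #{c | NAESatC τ (gadgetFormula n d (g, c))} + (if g.1 ∈ collapsed τ then 1 else 0)
      ≤ 4 := by
  split_ifs with hg
  · obtain ⟨c, hc⟩ := exists_not_naeSatC_gadgetFormula τ hg
    have : #{c | NAESatC τ (gadgetFormula n d (g, c))} < 4 :=
      (card_lt_univ_of_notMem (x := c) (by simpa using hc)).trans_eq (by simp)
    omega
  · simpa using (card_le_univ _).trans_eq (by simp)

lemma naeCount_gadgetFormula_add_le :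
    naeCount τ (gadgetFormula n d) + d * #(collapsed τ) ≤ 4 * d * n :=
  calc naeCount τ (gadgetFormula n d) + d * #(collapsed τ)
      = ∑ g : Fin n × Fin d, (#{c | NAESatC τ (gadgetFormula n d (g, c))} +
          if g.1 ∈ collapsed τ then 1 else 0) := by
        rw [sum_add_distrib]
        congr 1
        · simp only [naeCount, card_filter, Fintype.sum_prod_type]
        · calc d * #(collapsed τ) = #(collapsed τ ×ˢ (univ : Finset (Fin d))) := by
                rw [card_product, card_fin, mul_comm]
            _ = _ := by rw [sum_boole, Nat.cast_id]; congr 1; ext; simp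
    _ ≤ ∑ _g : Fin n × Fin d, 4 := sum_le_sum fun g _ => card_naeSatC_gadgetFormula_add_le τ g
    _ = 4 * d * n := by simp; ring

lemma naeCount_formula_le (ψ : Fin m → Fin 3 → Fin n × Bool)
    (hψ : ∀ i, occCount ψ i ≤ d) :
    naeCount τ (formula d ψ) ≤ naeCount (decode τ) ψ + 4 * d * n := by
  have := naeCount_liftFormula_le τ ψ hψ
  have := naeCount_gadgetFormula_add_le τ
  rw [formula, naeCount_sumElim]
  omega

end Soundness

lemma naeSatC_formula_encode {ψ : Fin m → Fin 3 → Fin n × Bool} {σ : Fin n → Bool}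
    (hσ : ∀ a, NAESatC σ (ψ a)) (x : Clause n m d) :
    NAESatC (encode d σ) (formula d ψ x) := by
  rcases x with a | ⟨g, c⟩
  · exact (naeSatC_liftFormula_iff fun r => rfl).mpr (hσ a)
  · -- the first two literals are `(i, true), (i, false)`, resp. `a₀ = true, a₁ = false`
    cases c <;>
      exact naeSatC_of_litVal_ne (r := 0) (r' := 1)
        (by simp [formula, gadgetFormula, gadget, litVal, encode])

end MonotoneReduction

lemma one_sub_mul_add_le_of_le_three_mul {ε m n d : ℝ} (hε : 0 ≤ ε) (hd : 0 ≤ d)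
    (hn : n ≤ 3 * m) :
    (1 - ε) * m + 4 * d * n ≤ (1 - ε / (1 + 12 * d)) * (m + 4 * d * n) := by
  have hpos : 0 < 1 + 12 * d := by linarith
  have key : ε / (1 + 12 * d) * (m + 4 * d * n) ≤ ε * m := by
    rw [div_mul_eq_mul_div, div_le_iff₀ hpos]
    nlinarith [mul_nonneg hε hd]
  linarith

theorem stmt_8_general (n m d : ℕ)
    (ε : ℝ) (hε0 : 0 < ε)
    (ψ : Fin m → Fin 3 → Fin n × Bool)
    (hocc : ∀ i : Fin n, 1 ≤ occCount ψ i ∧ occCount ψ i ≤ d) :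
    ∃ φ : Fin (m + 4 * d * n) → Fin 3 → Fin (2 * n + 3 * d * n) × Bool,
      (∀ a r, (φ a r).2 = true) ∧
      (∀ i : Fin (2 * n + 3 * d * n), occCount φ i ≤ 4 * d) ∧
      ((∃ σ : Fin n → Bool, ∀ a, NAESatC σ (ψ a)) →
        ∃ τ : Fin (2 * n + 3 * d * n) → Bool, ∀ a, NAESatC τ (φ a)) ∧
      ((∀ σ : Fin n → Bool, (naeCount σ ψ : ℝ) ≤ (1 - ε) * m) →
        ∀ τ : Fin (2 * n + 3 * d * n) → Bool,
          (naeCount τ φ : ℝ) ≤ (1 - ε / (1 + 12 * d)) * (m + 4 * d * n)) := by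
  open MonotoneReduction in
    let eI : Clause n m d ≃ Fin (m + 4 * d * n) :=
      Fintype.equivFinOfCardEq (by simp; ring)
    let eV : Var n d ≃ Fin (2 * n + 3 * d * n) :=
      Fintype.equivFinOfCardEq (by simp; ring)
    refine ⟨relabel eI eV (formula d ψ), fun a r => formula_snd ψ _ r, fun w => ?_,
      fun ⟨σ, hσ⟩ => ⟨encode d σ ∘ eV.symm, fun a => ?_⟩, fun hψ τ => ?_⟩
    · rw [← eV.apply_symm_apply w, occCount_relabel]
      exact occCount_formula_le ψ (fun i => (hocc i).2) _
    · rw [naeSatC_relabel, Function.comp_assoc, eV.symm_comp_self]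
      exact naeSatC_formula_encode hσ _
    · have hn : n ≤ 3 * m := by
        simpa using card_le_mul_card_of_one_le_occCount ψ fun i => (hocc i).1
      rw [naeCount_relabel]
      calc (naeCount (τ ∘ eV) (formula d ψ) : ℝ)
          ≤ naeCount (decode (τ ∘ eV)) ψ + 4 * d * n := by
            exact_mod_cast naeCount_formula_le _ ψ fun i => (hocc i).2
        _ ≤ (1 - ε) * m + 4 * d * n := by grw [hψ]
        _ ≤ _ := one_sub_mul_add_le_of_le_three_mul hε0.le d.cast_nonneg (by exact_mod_cast hn)

/-- Reduction from NAE3-SAT to monotone NAE3-SAT (Lemma: nae3sat-mononae3sat). -/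
theorem stmt_8 (n m d : ℕ) (hn : 1 ≤ n) (hm : 1 ≤ m) (hd : 1 ≤ d)
    (ε : ℝ) (hε0 : 0 < ε) (hε1 : ε < 1)
    (ψ : Fin m → Fin 3 → Fin n × Bool)
    (hocc : ∀ i : Fin n, 1 ≤ occCount ψ i ∧ occCount ψ i ≤ d) :
    ∃ φ : Fin (m + 4 * d * n) → Fin 3 → Fin (2 * n + 3 * d * n) × Bool,
      (∀ a r, (φ a r).2 = true) ∧
      (∀ i : Fin (2 * n + 3 * d * n), occCount φ i ≤ 4 * d) ∧
      ((∃ σ : Fin n → Bool, ∀ a, NAESatC σ (ψ a)) →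
        ∃ τ : Fin (2 * n + 3 * d * n) → Bool, ∀ a, NAESatC τ (φ a)) ∧
      ((∀ σ : Fin n → Bool, (naeCount σ ψ : ℝ) ≤ (1 - ε) * m) →
        ∀ τ : Fin (2 * n + 3 * d * n) → Bool,
          (naeCount τ φ : ℝ) ≤ (1 - ε / (1 + 12 * d)) * (m + 4 * d * n)) :=
  stmt_8_general n m d ε hε0 ψ hocc
end

section
/- Let n ≥ 2 and let ℓ be a symmetric labeling that assigns to each unordered pair of distinct vertices {u, v} of the complete graph on vertex set Fin n a label in {+, −} (encoded as Bool, with true meaning +). Then there exists a 2-clustering c : Fin n → Bool such that the number of agreements of c with ℓ — that is, the number of unordered pairs {u, v} of distinct vertices with either ℓ({u,v}) = + and c u = c v, or ℓ({u,v}) = − and c u ≠ c v — is at least half the total number of pairs; equivalently, 4 times the number of agreements is at least n(n−1). In particular, 16 times the number of agreements is at least n². -/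
/-- The number of unordered pairs `{u, v}` of distinct vertices of `Fin n` that agree
with the 2-clustering `c` under the labeling `ℓ` (`true` meaning `+`): pairs labeled `+`
with both endpoints in the same cluster, or labeled `−` with endpoints in
different clusters. Pairs are counted as ordered pairs `(u, v)` with `u < v`. -/
def agreements {n : ℕ} (ℓ : Fin n → Fin n → Bool) (c : Fin n → Bool) : ℕ :=
  (Finset.univ.filter (fun p : Fin n × Fin n =>
    p.1 < p.2 ∧ ((ℓ p.1 p.2 = true ∧ c p.1 = c p.2) ∨
                 (ℓ p.1 p.2 = false ∧ c p.1 ≠ c p.2)))).card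

open Finset

lemma aux_half_eq {n : ℕ} (hn : 1 ≤ n) (u v : Fin n) (huv : u ≠ v) :
    (Finset.univ.filter (fun c : Fin n → Bool => c u = c v)).card = 2 ^ (n - 1) ∧
    (Finset.univ.filter (fun c : Fin n → Bool => ¬ c u = c v)).card = 2 ^ (n - 1) := by
  classical
  have hcard : (Finset.univ.filter (fun c : Fin n → Bool => c u = c v)).card
      = (Finset.univ.filter (fun c : Fin n → Bool => ¬ c u = c v)).card := by
    refine Finset.card_bij' (fun c _ => Function.update c u (!c u))
      (fun c _ => Function.update c u (!c u)) ?_ ?_ ?_ ?_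
    · intro c hc
      simp only [mem_filter, mem_univ, true_and] at hc ⊢
      rw [Function.update_self, Function.update_of_ne (Ne.symm huv), ← hc]
      exact Bool.not_ne_self _
    · intro c hc
      simp only [mem_filter, mem_univ, true_and] at hc ⊢
      rw [Function.update_self, Function.update_of_ne (Ne.symm huv)]
      rcases Bool.eq_false_or_eq_true (c v) with h | h <;>
        rcases Bool.eq_false_or_eq_true (c u) with h' | h' <;>
        simp [h, h'] at hc ⊢
    · intro c _
      funext x
      by_cases hx : x = u
      · subst hx; simp [Function.update_self]
      · simp [Function.update_of_ne hx]
    · intro c _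
      funext x
      by_cases hx : x = u
      · subst hx; simp [Function.update_self]
      · simp [Function.update_of_ne hx]
  have htot : (Finset.univ.filter (fun c : Fin n → Bool => c u = c v)).card
      + (Finset.univ.filter (fun c : Fin n → Bool => ¬ c u = c v)).card
      = 2 ^ n := by
    rw [Finset.card_filter_add_card_filter_not]
    simp [Fintype.card_fun]
  have hpow : 2 ^ (n - 1 + 1) = 2 ^ (n - 1) * 2 := pow_succ 2 (n - 1)
  rw [Nat.sub_add_cancel hn] at hpow
  rw [← hcard, ← two_mul, hpow, mul_comm (2 ^ (n - 1)) 2] at htot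
  have heq := Nat.eq_of_mul_eq_mul_left (by norm_num) htot
  exact ⟨heq, hcard ▸ heq⟩

lemma aux_two_mul_cardP (n : ℕ) :
    2 * (Finset.univ.filter (fun p : Fin n × Fin n => p.1 < p.2)).card = n * (n - 1) := by
  classical
  have hswap : (Finset.univ.filter (fun p : Fin n × Fin n => p.1 < p.2)).card
      = (Finset.univ.filter (fun p : Fin n × Fin n => p.2 < p.1)).card := by
    refine Finset.card_bij' (fun p _ => Prod.swap p) (fun p _ => Prod.swap p) ?_ ?_ ?_ ?_
    · intro p hp; simp only [mem_filter, mem_univ, true_and] at hp ⊢; exact hp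
    · intro p hp; simp only [mem_filter, mem_univ, true_and] at hp ⊢; exact hp
    · intro p _; rfl
    · intro p _; rfl
  have hdiag : (Finset.univ.filter (fun p : Fin n × Fin n => p.2 = p.1)).card = n := by
    have himg : (Finset.univ.filter (fun p : Fin n × Fin n => p.2 = p.1))
        = Finset.univ.image (fun a : Fin n => (a, a)) := by
      ext p
      simp only [mem_filter, mem_univ, true_and, mem_image]
      constructor
      · intro h; exact ⟨p.1, by obtain ⟨a, b⟩ := p; simp_all⟩
      · rintro ⟨a, _, rfl⟩; rfl
    rw [himg, Finset.card_image_of_injective _ (fun a b h => (Prod.mk.injEq _ _ _ _).mp h |>.1)]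
    simp
  have hunion : (Finset.univ.filter (fun p : Fin n × Fin n => ¬ p.1 < p.2))
      = (Finset.univ.filter (fun p : Fin n × Fin n => p.2 < p.1))
        ∪ (Finset.univ.filter (fun p : Fin n × Fin n => p.2 = p.1)) := by
    rw [← Finset.filter_or]
    apply Finset.filter_congr
    intro p _
    simp only [not_lt, le_iff_lt_or_eq]
  have hdisj : Disjoint (Finset.univ.filter (fun p : Fin n × Fin n => p.2 < p.1))
      (Finset.univ.filter (fun p : Fin n × Fin n => p.2 = p.1)) := by
    rw [Finset.disjoint_filter]
    intro p _ h h'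
    rw [h'] at h
    exact lt_irrefl _ h
  have hsplit : (Finset.univ.filter (fun p : Fin n × Fin n => ¬ p.1 < p.2)).card
      = (Finset.univ.filter (fun p : Fin n × Fin n => p.2 < p.1)).card + n := by
    rw [hunion, Finset.card_union_of_disjoint hdisj, hdiag]
  have htot : (Finset.univ.filter (fun p : Fin n × Fin n => p.1 < p.2)).card
      + (Finset.univ.filter (fun p : Fin n × Fin n => ¬ p.1 < p.2)).card = n * n := by
    rw [Finset.card_filter_add_card_filter_not]
    simp
  have hnn : n * (n - 1) + n = n * n := by
    cases n with
    | zero => simp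
    | succ m => simp only [Nat.add_sub_cancel]; ring
  omega

theorem stmt_12 (n : ℕ) (hn : 2 ≤ n) (ℓ : Fin n → Fin n → Bool)
    (hsym : ∀ u v, ℓ u v = ℓ v u) :
    ∃ c : Fin n → Bool,
      n * (n - 1) ≤ 4 * agreements ℓ c ∧ n ^ 2 ≤ 16 * agreements ℓ c := by
  classical
  set P : Finset (Fin n × Fin n) := Finset.univ.filter (fun p => p.1 < p.2) with hP
  have key : ∀ c : Fin n → Bool, agreements ℓ c =
      ∑ p ∈ P, (if ((ℓ p.1 p.2 = true ∧ c p.1 = c p.2) ∨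
                    (ℓ p.1 p.2 = false ∧ c p.1 ≠ c p.2)) then 1 else 0) := by
    intro c
    rw [agreements, ← Finset.card_filter, hP, Finset.filter_filter]
  have hsum : ∑ c : Fin n → Bool, agreements ℓ c = P.card * 2 ^ (n - 1) := by
    simp_rw [key]
    rw [Finset.sum_comm]
    calc ∑ p ∈ P, ∑ c : Fin n → Bool,
          (if ((ℓ p.1 p.2 = true ∧ c p.1 = c p.2) ∨
               (ℓ p.1 p.2 = false ∧ c p.1 ≠ c p.2)) then 1 else 0)
        = ∑ _p ∈ P, 2 ^ (n - 1) := by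
          apply Finset.sum_congr rfl
          intro p hp
          have hlt : p.1 < p.2 := by rw [hP] at hp; simpa using hp
          have hne : p.1 ≠ p.2 := ne_of_lt hlt
          have h1 : 1 ≤ n := by omega
          rw [← Finset.card_filter]
          rcases Bool.eq_false_or_eq_true (ℓ p.1 p.2) with h | h
          · simp only [h]
            have := (aux_half_eq h1 p.1 p.2 hne).1
            simpa using this
          · simp only [h]
            have := (aux_half_eq h1 p.1 p.2 hne).2
            simpa using this
      _ = P.card * 2 ^ (n - 1) := by rw [Finset.sum_const, smul_eq_mul]
  have h2 : (Finset.univ : Finset (Fin n → Bool)).card = 2 ^ n := by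
    simp [Fintype.card_fun]
  have hcp := aux_two_mul_cardP n
  rw [← hP] at hcp
  have havg : ∑ _c : Fin n → Bool, P.card ≤
      ∑ c : Fin n → Bool, 2 * agreements ℓ c := by
    rw [Finset.sum_const, h2, smul_eq_mul, ← Finset.mul_sum, hsum]
    apply le_of_eq
    have hpow : 2 ^ (n - 1 + 1) = 2 ^ (n - 1) * 2 := pow_succ 2 (n - 1)
    rw [Nat.sub_add_cancel (by omega : 1 ≤ n)] at hpow
    rw [hpow]
    ring
  obtain ⟨c, _, hc⟩ := Finset.exists_le_of_sum_le Finset.univ_nonempty havg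
  obtain ⟨m, rfl⟩ : ∃ m, n = m + 2 := ⟨n - 2, by omega⟩
  have hsub : m + 2 - 1 = m + 1 := by omega
  rw [hsub] at hcp
  refine ⟨c, ?_, ?_⟩
  · rw [hsub]; linarith [hc, hcp]
  · nlinarith [hc, hcp, sq_nonneg m]
end
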